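/- arXiv:1803.06463 — 2 statements merged into one kernel-verified Lean document; each statement's English description precedes it below -/
import Mathlib

section
/- Let N ≥ 2 and let M = (m_{i,j}) ∈ M(N,r) with λ = ro(M) and μ = co(M). Fix h with 1 ≤ h < N and λ_h ≥ 1, and set λ⁻ = λ − e_h + e_{h+1} ∈ Λ(N,r), where e_i ∈ ℕ^N is the i-th standard basis vector. Then the set product (W_{λ⁻}·W_λ)·(W_λ d_M W_μ) = {x·y : x ∈ W_{λ⁻}W_λ, y ∈ W_λ d_M W_μ} is equal to the union, over those k ∈ {1,…,N} with m_{h,k} ≥ 1, of the double cosets W_{λ⁻} d_{M⁻_{h,k}} W_μ, and these double cosets are pairwise disjoint. -/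
open Equiv Finset

/-- The simple transposition `s i = (i, i+1)` (1-based) in the symmetric group `W` on
`{1, …, r}`, realised as `Equiv.Perm (Fin r)`, where the point `x : Fin r` carries the
label `x.val + 1`.  For `i` outside the range `1 ≤ i < r` we set `s i = 1`. -/
def sT (r : ℕ) (i : ℕ) : Equiv.Perm (Fin r) :=
  if h : 1 ≤ i ∧ i < r then Equiv.swap ⟨i - 1, by omega⟩ ⟨i, h.2⟩ else 1

/-- The ascending product `s_a · s_{a+1} ⋯ s_{a+n-1}` (equal to `1` when `n = 0`);
the rightmost factor acts first. -/
def ascProd (r a n : ℕ) : Equiv.Perm (Fin r) :=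
  ((List.range n).map (fun t => sT r (a + t))).prod

/-- The descending product `s_b · s_{b-1} ⋯ s_{b-n+1}` (equal to `1` when `n = 0`);
the rightmost factor acts first. -/
def descProd (r b n : ℕ) : Equiv.Perm (Fin r) :=
  ((List.range n).map (fun t => sT r (b - t))).prod

/-- The Coxeter length `ℓ(w)`, i.e. the number of inversions of `w`. -/
def clen {r : ℕ} (w : Equiv.Perm (Fin r)) : ℕ :=
  (Finset.univ.filter (fun p : Fin r × Fin r => p.1 < p.2 ∧ w p.2 < w p.1)).card

/-- `ptil lam i` is the partial sum `λ̃_i = λ_1 + ⋯ + λ_i` (1-based `i`). -/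
def ptil {N : ℕ} (lam : Fin N → ℕ) (i : ℕ) : ℕ :=
  ∑ l : Fin N, if l.val + 1 ≤ i then lam l else 0

/-- The block `N_i^λ = {λ̃_{i-1}+1, …, λ̃_i}` (1-based `i`), as a set of points of `Fin r`
(the point `x` has label `x.val + 1`). -/
def blockSet (r : ℕ) {N : ℕ} (lam : Fin N → ℕ) (i : ℕ) : Finset (Fin r) :=
  Finset.univ.filter (fun x => ptil lam (i - 1) ≤ x.val ∧ x.val < ptil lam i)

/-- The index of the block of `λ` containing the point `x`. -/
def blockOf {r N : ℕ} (lam : Fin N → ℕ) (x : Fin r) : ℕ :=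
  ((Finset.range N).filter (fun i => ptil lam (i + 1) ≤ x.val)).card

/-- The Young subgroup `W_λ`: all permutations stabilizing each block `N_i^λ`. -/
def young (r : ℕ) {N : ℕ} (lam : Fin N → ℕ) : Subgroup (Equiv.Perm (Fin r)) where
  carrier := {w | ∀ x : Fin r, blockOf lam (w x) = blockOf lam x}
  one_mem' := by intro x; rfl
  mul_mem' := by
    intro a b ha hb x
    have h := (ha (b x)).trans (hb x)
    simpa [Equiv.Perm.mul_apply] using h
  inv_mem' := by
    intro a ha x
    have h := ha (a⁻¹ x)
    simpa using h.symm

/-- The double coset `W_λ d W_μ`, as a set of permutations. -/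
def dcoset (r : ℕ) {N : ℕ} (lam mu : Fin N → ℕ) (d : Equiv.Perm (Fin r)) :
    Set (Equiv.Perm (Fin r)) :=
  {w | ∃ x ∈ young r lam, ∃ y ∈ young r mu, w = x * d * y}

/-- `d ∈ 𝒟_{λμ}`: `d` has minimal length in its double coset `W_λ d W_μ`. -/
def isMinRep (r : ℕ) {N : ℕ} (lam mu : Fin N → ℕ) (d : Equiv.Perm (Fin r)) : Prop :=
  ∀ w ∈ dcoset r lam mu d, clen d ≤ clen w

/-- The composition `ro M` of row sums of a matrix. -/
def rowSums {N : ℕ} (M : Fin N → Fin N → ℕ) : Fin N → ℕ := fun i => ∑ j, M i j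

/-- The composition `co M` of column sums of a matrix. -/
def colSums {N : ℕ} (M : Fin N → Fin N → ℕ) : Fin N → ℕ := fun j => ∑ i, M i j

/-- `d` is the distinguished double coset representative `d_M` attached to the matrix `M`:
`d` is the minimal length element in its `(W_{ro M}, W_{co M})` double coset, and
`|N_i^{ro M} ∩ d(N_j^{co M})| = m_{i,j}` for all `i, j`. -/
def isDM (r : ℕ) {N : ℕ} (M : Fin N → Fin N → ℕ) (d : Equiv.Perm (Fin r)) : Prop :=
  isMinRep r (rowSums M) (colSums M) d ∧
    ∀ i j : Fin N,
      ((blockSet r (rowSums M) (i.val + 1)) ∩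
        (blockSet r (colSums M) (j.val + 1)).image d).card = M i j

/-- The `(i,j)` entry of `M` with 1-based indices (`0` outside the range). -/
def ent {N : ℕ} (M : Fin N → Fin N → ℕ) (i j : ℕ) : ℕ :=
  if h : 1 ≤ i ∧ i ≤ N ∧ 1 ≤ j ∧ j ≤ N then M ⟨i - 1, by omega⟩ ⟨j - 1, by omega⟩ else 0

/-- `μ̃_{j-1}` for `μ = co M`: the sum of the first `j - 1` column sums of `M`. -/
def colPS {N : ℕ} (M : Fin N → Fin N → ℕ) (j : ℕ) : ℕ :=
  ∑ p : Fin N × Fin N, if p.2.val + 1 < j then M p.1 p.2 else 0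

/-- `σ_{i,j} = μ̃_{j-1} + Σ_{k ≤ i, l ≥ j} m_{k,l}` (1-based `i, j`). -/
def sigmaS {N : ℕ} (M : Fin N → Fin N → ℕ) (i j : ℕ) : ℕ :=
  colPS M j + ∑ p : Fin N × Fin N, if p.1.val + 1 ≤ i ∧ j ≤ p.2.val + 1 then M p.1 p.2 else 0

/-- `m̃_{i,j} = μ̃_{j-1} + Σ_{h ≤ i} m_{h,j}` (1-based `i, j`): the partial sum of the
column-reading sequence of `M` up to the entry `(i, j)`. -/
def mtil {N : ℕ} (M : Fin N → Fin N → ℕ) (i j : ℕ) : ℕ :=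
  colPS M j + ∑ p : Fin N × Fin N, if p.1.val + 1 ≤ i ∧ p.2.val + 1 = j then M p.1 p.2 else 0

/-- The element `w_{i,j}` (1-based `i, j`):
`w_{i,j} = (s_{σ_{i-1,j}} ⋯ s_{m̃_{i-1,j}+1})(s_{σ_{i-1,j}+1} ⋯ s_{m̃_{i-1,j}+2}) ⋯
(s_{σ_{i-1,j}+m_{i,j}-1} ⋯ s_{m̃_{i,j}})`, with `w_{i,j} = 1` when `m_{i,j} = 0` or
`σ_{i-1,j} = m̃_{i-1,j}`. -/
def wE (r : ℕ) {N : ℕ} (M : Fin N → Fin N → ℕ) (i j : ℕ) : Equiv.Perm (Fin r) :=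
  ((List.range (ent M i j)).map
    (fun x => descProd r (sigmaS M (i - 1) j + x) (sigmaS M (i - 1) j - mtil M (i - 1) j))).prod

/-- The column product `w_{2,j} w_{3,j} ⋯ w_{N,j}`. -/
def colProd (r : ℕ) {N : ℕ} (M : Fin N → Fin N → ℕ) (j : ℕ) : Equiv.Perm (Fin r) :=
  ((List.range (N - 1)).map (fun t => wE r M (t + 2) j)).prod

/-- `Π_t`: the product of the first `t` column products
`(w_{2,1} ⋯ w_{N,1})(w_{2,2} ⋯ w_{N,2}) ⋯ (w_{2,t} ⋯ w_{N,t})`. -/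
def piProd (r : ℕ) {N : ℕ} (M : Fin N → Fin N → ℕ) (t : ℕ) : Equiv.Perm (Fin r) :=
  ((List.range t).map (fun c => colProd r M (c + 1))).prod

/-! The double coset `W_α w W_β` of a permutation `w` is determined by its block matrix
`(|N_i^α ∩ w(N_j^β)|)_{i,j}`. Passing from `λ` to `λ⁻` only moves the last point `p` of
block `h` into block `h + 1`, so the `(λ⁻, μ)`-matrix of `w` is its `(λ, μ)`-matrix with one
unit moved from `(h, k)` to `(h + 1, k)`, where `k` is the `μ`-block of `w⁻¹ p`. Hence every
element of `W_{λ⁻} W_λ d_M W_μ` lies in `W_{λ⁻} d_{M⁻_{h,k}} W_μ` for some `k` with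
`m_{h,k} ≥ 1`. Conversely, if `w ∈ W_{λ⁻} d_{M⁻_{h,k}} W_μ`, then block `h + 1` of `λ⁻`
contains a point `q ∈ w(N_k^μ)`, and `(p q) w` lies in `W_λ d_M W_μ`. The double cosets are
disjoint because their `(h, k)` entries differ. -/

lemma sum_ite_val_eq {β : Type*} [AddCommMonoid β] {N a : ℕ} (ha : a < N) (c : β) :
    (∑ x : Fin N, if x.val = a then c else 0) = c := by
  rw [Fintype.sum_eq_single ⟨a, ha⟩ fun x hx => if_neg fun h => hx (Fin.ext h), if_pos rfl]

lemma add_ite_eq_add_ite_of_eq_ite {x y : ℕ} {P Q : Prop} [Decidable P] [Decidable Q]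
    (hPQ : ¬(P ∧ Q)) (hy : P → 1 ≤ y)
    (hx : x = if P then y - 1 else if Q then y + 1 else y) :
    x + (if P then 1 else 0) = y + (if Q then 1 else 0) := by
  subst hx
  by_cases hP : P
  · have hQ : ¬Q := fun hQ => hPQ ⟨hP, hQ⟩
    have := hy hP
    simp only [hP, hQ, if_true, if_false]
    omega
  · simp only [hP, if_false]
    split_ifs <;> omega

lemma Equiv.Perm.exists_comp_eq_of_card_fiber_eq {α β : Type*} [Fintype α] [DecidableEq β]
    {f g : α → β} (h : ∀ b, #{a | f a = b} = #{a | g a = b}) :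
    ∃ σ : Perm α, ∀ a, g (σ a) = f a := by
  have e : ∀ b, {a // f a = b} ≃ {a // g a = b} := fun b =>
    Fintype.equivOfCardEq (by simpa only [Fintype.card_subtype] using h b)
  exact ⟨(sigmaFiberEquiv f).symm.trans ((Equiv.sigmaCongrRight e).trans (sigmaFiberEquiv g)),
    fun a => (e (f a) ⟨a, rfl⟩).prop⟩

section Blocks

variable {r N : ℕ} {lam : Fin N → ℕ}

lemma ptil_mono (lam : Fin N → ℕ) : Monotone (ptil lam) := fun _ _ hii =>
  Finset.sum_le_sum fun _ _ => by split_ifs <;> omega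

lemma ptil_of_le {i : ℕ} (hi : N ≤ i) : ptil lam i = ∑ l, lam l :=
  Finset.sum_congr rfl fun l _ => if_pos (by omega)

lemma blockOf_eq_of_ptil_le {x : Fin r} {i : ℕ} (hi : ptil lam i ≤ x.val)
    (hx : x.val < ptil lam (i + 1)) : blockOf lam x = i := by
  have hiN : i < N := by
    by_contra hc
    have := ptil_of_le (lam := lam) (show N ≤ i by omega)
    have := ptil_of_le (lam := lam) (show N ≤ i + 1 by omega)
    omega
  have hrange : (range N).filter (fun j => ptil lam (j + 1) ≤ x.val) = range i := by
    ext j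
    simp only [mem_filter, mem_range]
    constructor
    · rintro ⟨-, hj⟩
      by_contra hc
      have := ptil_mono lam (show i + 1 ≤ j + 1 by omega)
      omega
    · intro hj
      exact ⟨by omega, (ptil_mono lam (show j + 1 ≤ i by omega)).trans hi⟩
  rw [blockOf, hrange, card_range]

lemma exists_ptil_le_lt {x : ℕ} (hx : x < ptil lam N) :
    ∃ i, ptil lam i ≤ x ∧ x < ptil lam (i + 1) := by
  have hex : ∃ i, x < ptil lam (i + 1) :=
    ⟨N, by rwa [ptil_of_le (by omega), ← ptil_of_le le_rfl]⟩
  refine ⟨Nat.find hex, ?_, Nat.find_spec hex⟩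
  rcases hfind : Nat.find hex with _ | i
  · simp [ptil]
  · exact not_lt.1 (Nat.find_min hex (by omega : i < Nat.find hex))

lemma blockOf_eq_iff (hsum : ∑ l, lam l = r) (x : Fin r) (i : ℕ) :
    blockOf lam x = i ↔ ptil lam i ≤ x.val ∧ x.val < ptil lam (i + 1) := by
  obtain ⟨j, hj, hxj⟩ := exists_ptil_le_lt (lam := lam) (x := x.val) (by
    rw [ptil_of_le le_rfl, hsum]; exact x.isLt)
  rw [blockOf_eq_of_ptil_le hj hxj]
  refine ⟨by rintro rfl; exact ⟨hj, hxj⟩, fun ⟨hi, hxi⟩ => ?_⟩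
  rw [← blockOf_eq_of_ptil_le (x := x) hj hxj, blockOf_eq_of_ptil_le hi hxi]

lemma blockOf_lt (hsum : ∑ l, lam l = r) (x : Fin r) : blockOf lam x < N := by
  have hx := (blockOf_eq_iff hsum x _).1 rfl
  by_contra hc
  rw [ptil_of_le (by omega), hsum] at hx
  omega

lemma mem_blockSet_iff (hsum : ∑ l, lam l = r) (x : Fin r) (i : ℕ) :
    x ∈ blockSet r lam (i + 1) ↔ blockOf lam x = i := by
  simp [blockSet, blockOf_eq_iff hsum]

lemma swap_mem_young {p q : Fin r} (hpq : blockOf lam p = blockOf lam q) :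
    swap p q ∈ young r lam := by
  intro x
  rcases eq_or_ne x p with rfl | hxp
  · rw [swap_apply_left, hpq]
  rcases eq_or_ne x q with rfl | hxq
  · rw [swap_apply_right, hpq]
  rw [swap_apply_of_ne_of_ne hxp hxq]

end Blocks

section BlockMatrix

variable {r N : ℕ} {al be : Fin N → ℕ}

/-- The `(i, j)` entry is `|N_{i+1}^α ∩ w(N_{j+1}^β)|` (indices are 0-based). -/
def blockMatrix (al be : Fin N → ℕ) (w : Perm (Fin r)) (i j : ℕ) : ℕ :=
  #{z | blockOf al (w z) = i ∧ blockOf be z = j}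

lemma blockMatrix_pos_iff {w : Perm (Fin r)} {i j : ℕ} :
    0 < blockMatrix al be w i j ↔ ∃ z, blockOf al (w z) = i ∧ blockOf be z = j := by
  simp [blockMatrix, Finset.card_pos, Finset.Nonempty]

lemma blockMatrix_mul_left {x : Perm (Fin r)} (hx : x ∈ young r al) (w : Perm (Fin r)) :
    blockMatrix al be (x * w) = blockMatrix al be w := by
  funext i j
  simp only [blockMatrix, Perm.mul_apply, hx _]

lemma blockMatrix_mul_right {y : Perm (Fin r)} (hy : y ∈ young r be) (w : Perm (Fin r)) :
    blockMatrix al be (w * y) = blockMatrix al be w := by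
  funext i j
  exact card_equiv y fun z => by
    rw [mem_filter, mem_filter, Perm.mul_apply, hy z]
    simp

lemma mem_dcoset_iff {d w : Perm (Fin r)} :
    w ∈ dcoset r al be d ↔ blockMatrix al be w = blockMatrix al be d := by
  refine ⟨fun ⟨x, hx, y, hy, hw⟩ => by
    rw [hw, blockMatrix_mul_right hy, blockMatrix_mul_left hx], fun h => ?_⟩
  obtain ⟨y, hy⟩ := Perm.exists_comp_eq_of_card_fiber_eq
    (f := fun z => (blockOf al (w z), blockOf be z))
    (g := fun z => (blockOf al (d z), blockOf be z))
    fun ⟨i, j⟩ => by simpa [blockMatrix, Prod.ext_iff] using congrFun₂ h i j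
  simp only [Prod.ext_iff] at hy
  refine ⟨w * y⁻¹ * d⁻¹, fun ξ => ?_, y, fun z => (hy z).2, by group⟩
  simpa using ((hy (y⁻¹ (d⁻¹ ξ))).1).symm

lemma card_inter_image_eq_blockMatrix (hal : ∑ l, al l = r) (hbe : ∑ l, be l = r)
    (d : Perm (Fin r)) (i j : ℕ) :
    #(blockSet r al (i + 1) ∩ (blockSet r be (j + 1)).image d) = blockMatrix al be d i j := by
  have himage : blockSet r al (i + 1) ∩ (blockSet r be (j + 1)).image d
      = ({z | blockOf al (d z) = i ∧ blockOf be z = j} : Finset (Fin r)).image d := by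
    ext u
    simp only [mem_inter, mem_image, mem_filter, mem_univ, true_and,
      mem_blockSet_iff hal, mem_blockSet_iff hbe]
    constructor
    · rintro ⟨hu, z, hz, rfl⟩
      exact ⟨z, ⟨hu, hz⟩, rfl⟩
    · rintro ⟨z, ⟨hu, hz⟩, rfl⟩
      exact ⟨hu, z, hz, rfl⟩
  rw [himage, card_image_of_injective _ d.injective, blockMatrix]

lemma blockMatrix_eq_zero_of_not_lt (hal : ∑ l, al l = r) (hbe : ∑ l, be l = r)
    (w : Perm (Fin r)) {i j : ℕ} (hij : ¬(i < N ∧ j < N)) : blockMatrix al be w i j = 0 := by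
  refine Nat.eq_zero_of_not_pos fun hpos => hij ?_
  obtain ⟨z, rfl, rfl⟩ := blockMatrix_pos_iff.1 hpos
  exact ⟨blockOf_lt hal _, blockOf_lt hbe _⟩

lemma exists_one_le_of_blockMatrix_eq (hbe : ∑ l, be l = r) {M : Fin N → Fin N → ℕ}
    {w : Perm (Fin r)} (hw : ∀ i j : Fin N, blockMatrix al be w i j = M i j) {p : Fin r}
    {i₀ : Fin N} (hi₀ : blockOf al p = i₀) :
    ∃ k : Fin N, blockOf be (w⁻¹ p) = k ∧ 1 ≤ M i₀ k := by
  refine ⟨⟨_, blockOf_lt hbe (w⁻¹ p)⟩, rfl, ?_⟩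
  rw [← hw]
  exact blockMatrix_pos_iff.2 ⟨w⁻¹ p, by simp [hi₀], rfl⟩

end BlockMatrix

section DistinguishedRepresentative

variable {r N : ℕ} {M M' : Fin N → Fin N → ℕ} {a b : ℕ} {k : Fin N}

lemma sum_colSums (M : Fin N → Fin N → ℕ) : ∑ j, colSums M j = ∑ i, ∑ j, M i j :=
  Finset.sum_comm

lemma mem_dcoset_iff_of_isDM (hM : ∑ i, ∑ j, M i j = r) {d w : Perm (Fin r)} (hd : isDM r M d) :
    w ∈ dcoset r (rowSums M) (colSums M) d ↔
      ∀ i j : Fin N, blockMatrix (rowSums M) (colSums M) w i j = M i j := by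
  have hrow : ∑ i, rowSums M i = r := hM
  have hcol : ∑ j, colSums M j = r := (sum_colSums M).trans hM
  have hdM : ∀ i j : Fin N, blockMatrix (rowSums M) (colSums M) d i j = M i j := fun i j =>
    (card_inter_image_eq_blockMatrix hrow hcol d i j).symm.trans (hd.2 i j)
  rw [mem_dcoset_iff]
  refine ⟨fun h i j => h ▸ hdM i j, fun h => funext₂ fun i j => ?_⟩
  by_cases hij : i < N ∧ j < N
  · exact (h ⟨i, hij.1⟩ ⟨j, hij.2⟩).trans (hdM ⟨i, hij.1⟩ ⟨j, hij.2⟩).symm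
  · rw [blockMatrix_eq_zero_of_not_lt hrow hcol _ hij,
      blockMatrix_eq_zero_of_not_lt hrow hcol _ hij]

lemma rowSums_add_ite
    (hrel : ∀ i j, M' i j + (if i.val = a ∧ j = k then 1 else 0)
      = M i j + (if i.val = b ∧ j = k then 1 else 0)) (i : Fin N) :
    rowSums M' i + (if i.val = a then 1 else 0) = rowSums M i + (if i.val = b then 1 else 0) := by
  have := sum_congr rfl fun j (_ : j ∈ univ) => hrel i j
  simpa [sum_add_distrib, rowSums, ite_and] using this

lemma colSums_eq_of_add_ite (ha : a < N) (hb : b < N)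
    (hrel : ∀ i j, M' i j + (if i.val = a ∧ j = k then 1 else 0)
      = M i j + (if i.val = b ∧ j = k then 1 else 0)) :
    colSums M' = colSums M := by
  funext j
  have := sum_congr rfl fun i (_ : i ∈ univ) => hrel i j
  simp only [sum_add_distrib, ite_and, sum_ite_val_eq ha, sum_ite_val_eq hb] at this
  exact Nat.add_right_cancel this

lemma mem_dcoset_iff_of_isDM_of_add_ite (hM : ∑ i, ∑ j, M i j = r) (ha : a < N) (hb : b < N)
    (hrel : ∀ i j, M' i j + (if i.val = a ∧ j = k then 1 else 0)
      = M i j + (if i.val = b ∧ j = k then 1 else 0))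
    {lam' : Fin N → ℕ}
    (hlam' : ∀ i, lam' i + (if i.val = a then 1 else 0)
      = rowSums M i + (if i.val = b then 1 else 0))
    {d w : Perm (Fin r)} (hd : isDM r M' d) :
    w ∈ dcoset r lam' (colSums M) d ↔
      ∀ i j : Fin N, blockMatrix lam' (colSums M) w i j = M' i j := by
  have hcol := colSums_eq_of_add_ite ha hb hrel
  have hrow : rowSums M' = lam' := funext fun i => by
    have := rowSums_add_ite hrel i
    have := hlam' i
    omega
  rw [← hrow, ← hcol]
  exact mem_dcoset_iff_of_isDM (by rw [← sum_colSums, hcol, sum_colSums, hM]) hd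

end DistinguishedRepresentative

section Shift

variable {r N : ℕ} {lam lam' : Fin N → ℕ} {a : ℕ}

lemma ptil_add_ite_of_shift (ha : a + 1 < N)
    (hshift : ∀ l : Fin N,
      lam' l + (if l.val = a then 1 else 0) = lam l + (if l.val = a + 1 then 1 else 0))
    (i : ℕ) :
    ptil lam' i + (if i = a + 1 then 1 else 0) = ptil lam i := by
  have hterm : ∀ l : Fin N,
      (if l.val + 1 ≤ i then lam' l else 0) +
          (if l.val = a then (if a + 1 ≤ i then 1 else 0) else 0)
        = (if l.val + 1 ≤ i then lam l else 0) +
          (if l.val = a + 1 then (if a + 2 ≤ i then 1 else 0) else 0) := fun l => by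
    have := hshift l
    split_ifs at * <;> omega
  have hsum := sum_congr rfl fun l (_ : l ∈ univ) => hterm l
  rw [sum_add_distrib, sum_add_distrib, sum_ite_val_eq (by omega), sum_ite_val_eq ha] at hsum
  unfold ptil
  split_ifs at hsum ⊢ <;> omega

lemma exists_blockOf_shift (hsum : ∑ l, lam l = r) (ha : a + 1 < N)
    (hshift : ∀ l : Fin N,
      lam' l + (if l.val = a then 1 else 0) = lam l + (if l.val = a + 1 then 1 else 0)) :
    ∃ p : Fin r, blockOf lam p = a ∧
      ∀ x, blockOf lam' x = blockOf lam x + if x = p then 1 else 0 := by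
  have hA := ptil_add_ite_of_shift ha hshift
  have h0 : ptil lam' a = ptil lam a := by simpa using hA a
  have h1 : ptil lam' (a + 1) + 1 = ptil lam (a + 1) := by simpa using hA (a + 1)
  have h2 : ptil lam' (a + 2) = ptil lam (a + 2) := by simpa using hA (a + 2)
  have hmono' := ptil_mono lam' (show a ≤ a + 1 by omega)
  have hmono := ptil_mono lam (show a + 1 ≤ a + 2 by omega)
  have hr : ptil lam (a + 1) ≤ r :=
    hsum ▸ ptil_of_le (lam := lam) le_rfl ▸ ptil_mono lam (show a + 1 ≤ N by omega)
  obtain ⟨p, hp⟩ : ∃ p : Fin r, p.val + 1 = ptil lam (a + 1) :=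
    ⟨⟨ptil lam (a + 1) - 1, by omega⟩, by simp only; omega⟩
  have hpa : blockOf lam p = a := blockOf_eq_of_ptil_le (by omega) (by omega)
  refine ⟨p, hpa, fun x => ?_⟩
  rcases eq_or_ne x p with rfl | hxp
  · rw [if_pos rfl, hpa]
    exact blockOf_eq_of_ptil_le (i := a + 1) (by omega) (by show x.val < ptil lam' (a + 2); omega)
  · rw [if_neg hxp, add_zero]
    have hxp' : x.val ≠ p.val := Fin.val_ne_of_ne hxp
    obtain ⟨hb, hxb⟩ := (blockOf_eq_iff hsum x _).1 rfl
    rcases eq_or_ne (blockOf lam x) a with hxa | hxa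
    · rw [hxa] at hb hxb ⊢
      exact blockOf_eq_of_ptil_le (by omega) (by omega)
    · have hb0 := hA (blockOf lam x)
      have hb1 := hA (blockOf lam x + 1)
      apply blockOf_eq_of_ptil_le <;> split_ifs at hb0 hb1 <;> omega

end Shift

section Lowering

variable {r N : ℕ} {al al' be : Fin N → ℕ} {p : Fin r}

lemma blockMatrix_add_ite_of_shift
    (hp : ∀ x, blockOf al' x = blockOf al x + if x = p then 1 else 0)
    (w : Perm (Fin r)) (i j : ℕ) :
    blockMatrix al' be w i j + (if i = blockOf al p ∧ j = blockOf be (w⁻¹ p) then 1 else 0)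
      = blockMatrix al be w i j +
        (if i = blockOf al p + 1 ∧ j = blockOf be (w⁻¹ p) then 1 else 0) := by
  have hz : ∀ z, (if blockOf al' (w z) = i ∧ blockOf be z = j then 1 else 0)
        + (if z = w⁻¹ p then
            (if i = blockOf al p ∧ j = blockOf be (w⁻¹ p) then 1 else 0) else 0)
      = (if blockOf al (w z) = i ∧ blockOf be z = j then 1 else 0)
        + (if z = w⁻¹ p then
            (if i = blockOf al p + 1 ∧ j = blockOf be (w⁻¹ p) then 1 else 0) else 0) := by
    intro z
    rcases eq_or_ne z (w⁻¹ p) with rfl | hz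
    · rw [Perm.coe_inv, apply_symm_apply, hp p, if_pos rfl, if_pos rfl, if_pos rfl]
      split_ifs <;> omega
    · have hwz : w z ≠ p := fun h => hz (by rw [← h, Perm.coe_inv, symm_apply_apply])
      simp only [hp, hwz, hz, if_false, add_zero]
  have := sum_congr rfl fun z (_ : z ∈ univ) => hz z
  simpa only [sum_add_distrib, Fintype.sum_ite_eq', blockMatrix, card_filter] using this

lemma blockMatrix_eq_iff_of_shift
    (hp : ∀ x, blockOf al' x = blockOf al x + if x = p then 1 else 0) {a : ℕ}
    (hpa : blockOf al p = a) {M M' : Fin N → Fin N → ℕ} {k : Fin N}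
    (hrel : ∀ i j, M' i j + (if i.val = a ∧ j = k then 1 else 0)
      = M i j + (if i.val = a + 1 ∧ j = k then 1 else 0))
    {w : Perm (Fin r)} (hwk : blockOf be (w⁻¹ p) = k) :
    (∀ i j : Fin N, blockMatrix al' be w i j = M' i j) ↔
      ∀ i j : Fin N, blockMatrix al be w i j = M i j := by
  refine forall₂_congr fun i j => ?_
  have h1 := blockMatrix_add_ite_of_shift (be := be) hp w i j
  have h2 := hrel i j
  rw [hpa, hwk] at h1
  simp only [Fin.ext_iff] at h2
  split_ifs at h1 h2 <;> omega

lemma exists_mem_young_blockOf_inv_eq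
    (hp : ∀ x, blockOf al' x = blockOf al x + if x = p then 1 else 0) {w : Perm (Fin r)}
    {j : ℕ} (hpos : 0 < blockMatrix al' be w (blockOf al p + 1) j) :
    ∃ s ∈ young r al', blockOf be ((s * w)⁻¹ p) = j := by
  obtain ⟨z, hwz, hz⟩ := blockMatrix_pos_iff.1 hpos
  have hpq : blockOf al' p = blockOf al' (w z) := by rw [hwz, hp p, if_pos rfl]
  refine ⟨swap p (w z), swap_mem_young hpq, ?_⟩
  rw [mul_inv_rev, swap_inv, Perm.mul_apply, swap_apply_left, Perm.coe_inv, symm_apply_apply, hz]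

lemma exists_blockMatrix_eq_of_shift
    (hp : ∀ x, blockOf al' x = blockOf al x + if x = p then 1 else 0) {a : ℕ}
    (hpa : blockOf al p = a) (ha : a < N) (hbe : ∑ l, be l = r) {M : Fin N → Fin N → ℕ}
    {M' : Fin N → Fin N → Fin N → ℕ}
    (hrel : ∀ k, 1 ≤ M ⟨a, ha⟩ k → ∀ i j,
      M' k i j + (if i.val = a ∧ j = k then 1 else 0)
        = M i j + (if i.val = a + 1 ∧ j = k then 1 else 0))
    {z : Perm (Fin r)} (hz : ∀ i j : Fin N, blockMatrix al be z i j = M i j) :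
    ∃ k, 1 ≤ M ⟨a, ha⟩ k ∧ ∀ i j : Fin N, blockMatrix al' be z i j = M' k i j := by
  obtain ⟨k, hzk, hk⟩ := exists_one_le_of_blockMatrix_eq hbe hz (i₀ := ⟨a, ha⟩) hpa
  exact ⟨k, hk, (blockMatrix_eq_iff_of_shift hp hpa (hrel k hk) hzk).2 hz⟩

lemma exists_mem_young_blockMatrix_eq_of_shift
    (hp : ∀ x, blockOf al' x = blockOf al x + if x = p then 1 else 0) {a : ℕ}
    (hpa : blockOf al p = a) (ha : a + 1 < N) {M M' : Fin N → Fin N → ℕ} {k : Fin N}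
    (hrel : ∀ i j, M' i j + (if i.val = a ∧ j = k then 1 else 0)
      = M i j + (if i.val = a + 1 ∧ j = k then 1 else 0))
    {w : Perm (Fin r)} (hw : ∀ i j : Fin N, blockMatrix al' be w i j = M' i j) :
    ∃ s ∈ young r al', ∀ i j : Fin N, blockMatrix al be (s * w) i j = M i j := by
  have hpos : 0 < blockMatrix al' be w (blockOf al p + 1) k := by
    have := hrel ⟨a + 1, ha⟩ k
    rw [hpa, hw ⟨a + 1, ha⟩ k]
    simp only [Nat.add_eq_left, one_ne_zero, and_true, ↓reduceIte, add_zero, and_self] at this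
    omega
  obtain ⟨s, hs, hsk⟩ := exists_mem_young_blockOf_inv_eq hp hpos
  refine ⟨s, hs, ?_⟩
  rw [← blockMatrix_eq_iff_of_shift hp hpa hrel hsk, blockMatrix_mul_left hs]
  exact hw

end Lowering

/-- Theorem `prod coset`, second decomposition.
With `λ = ro M`, `μ = co M`, `λ_h ≥ 1` (0-based row `h`), and `λ⁻ = λ - e_h + e_{h+1}`:
`(W_{λ⁻} · 1 · W_λ)(W_λ d_M W_μ) = ⋃_{k, m_{h,k} ≥ 1} W_{λ⁻} d_{M⁻_{h,k}} W_μ`,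
a disjoint union. -/
theorem stmt1 (N r : ℕ) (M : Fin N → Fin N → ℕ)
    (hMr : ∑ i, ∑ j, M i j = r)
    (h : ℕ) (hh : h + 1 < N)
    (hrow : 1 ≤ rowSums M ⟨h, by omega⟩)
    (lamM : Fin N → ℕ)
    (hlamM : ∀ i : Fin N, lamM i =
      if i.val = h then rowSums M i - 1
      else if i.val = h + 1 then rowSums M i + 1 else rowSums M i)
    (MM : Fin N → (Fin N → Fin N → ℕ))
    (hMM : ∀ k : Fin N, ∀ i j : Fin N, MM k i j =
      if i.val = h ∧ j = k then M i j - 1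
      else if i.val = h + 1 ∧ j = k then M i j + 1 else M i j)
    (dM : Equiv.Perm (Fin r)) (hdM : isDM r M dM)
    (dMn : Fin N → Equiv.Perm (Fin r))
    (hdMn : ∀ k : Fin N, 1 ≤ M ⟨h, by omega⟩ k → isDM r (MM k) (dMn k)) :
    ({w : Equiv.Perm (Fin r) |
        ∃ x ∈ dcoset r lamM (rowSums M) 1, ∃ y ∈ dcoset r (rowSums M) (colSums M) dM,
          w = x * y}
      = ⋃ k ∈ {k : Fin N | 1 ≤ M ⟨h, by omega⟩ k}, dcoset r lamM (colSums M) (dMn k)) ∧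
    ∀ k k' : Fin N, k ≠ k' → 1 ≤ M ⟨h, by omega⟩ k → 1 ≤ M ⟨h, by omega⟩ k' →
      Disjoint (dcoset r lamM (colSums M) (dMn k)) (dcoset r lamM (colSums M) (dMn k')) := by
  have hshift : ∀ l : Fin N, lamM l + (if l.val = h then 1 else 0)
      = rowSums M l + (if l.val = h + 1 then 1 else 0) := fun l =>
    add_ite_eq_add_ite_of_eq_ite (by omega)
      (fun hl => (Fin.ext hl : l = ⟨h, by omega⟩) ▸ hrow) (hlamM l)
  have hrel : ∀ k, 1 ≤ M ⟨h, by omega⟩ k → ∀ i j,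
      MM k i j + (if i.val = h ∧ j = k then 1 else 0)
        = M i j + (if i.val = h + 1 ∧ j = k then 1 else 0) := fun k hk i j =>
    add_ite_eq_add_ite_of_eq_ite (fun ⟨⟨h1, _⟩, h2, _⟩ => by omega)
      (fun ⟨hi, hj⟩ => hj ▸ (Fin.ext hi : i = ⟨h, by omega⟩) ▸ hk) (hMM k i j)
  have hD := fun w => mem_dcoset_iff_of_isDM (w := w) hMr hdM
  have hDk := fun k hk w => mem_dcoset_iff_of_isDM_of_add_ite (w := w) hMr (by omega) hh
    (hrel k hk) hshift (hdMn k hk)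
  obtain ⟨p, hph, hp⟩ := exists_blockOf_shift (lam := rowSums M) hMr hh hshift
  refine ⟨Set.ext fun w => ⟨?_, ?_⟩,
    fun k k' hkk' hk hk' => Set.disjoint_left.2 fun w hw hw' => ?_⟩
  · rintro ⟨_, ⟨u, hu, v, hv, rfl⟩, y, hy, rfl⟩
    have hy' := (hD y).1 hy
    rw [← blockMatrix_mul_left hv] at hy'
    obtain ⟨k, hk, hz⟩ :=
      exists_blockMatrix_eq_of_shift hp hph (by omega) ((sum_colSums M).trans hMr) hrel hy'
    refine Set.mem_biUnion hk ((hDk k hk _).2 ?_)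
    rwa [mul_one, mul_assoc, blockMatrix_mul_left hu]
  · simp only [Set.mem_iUnion]
    rintro ⟨k, hk, hw⟩
    obtain ⟨s, hs, hsw⟩ :=
      exists_mem_young_blockMatrix_eq_of_shift hp hph hh (hrel k hk) ((hDk k hk w).1 hw)
    exact ⟨s⁻¹, ⟨s⁻¹, inv_mem hs, 1, one_mem _, by group⟩, s * w, (hD _).2 hsw,
      by group⟩
  · have e := ((hDk k hk w).1 hw ⟨h, by omega⟩ k).symm.trans
      ((hDk k' hk' w).1 hw' ⟨h, by omega⟩ k)
    have h1 := hrel k hk ⟨h, by omega⟩ k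
    have h2 := hrel k' hk' ⟨h, by omega⟩ k
    simp only [and_self, ↓reduceIte, Nat.left_eq_add, one_ne_zero, and_true, add_zero, hkk',
      and_false] at h1 h2
    omega
end

section
/- Let N ≥ 2, M = (m_{i,j}) ∈ M(N,r), and fix 1 ≤ j ≤ N−1 and 1 ≤ h ≤ N−1. If l is an integer with σ_{h−1,j} + m_{h,j} < l < σ_{h,j} and l ≥ m̃_{h,j} + 1, then s_l · (w_{2,j} w_{3,j} ⋯ w_{N,j}) = (w_{2,j} w_{3,j} ⋯ w_{N,j}) · s_{l + Σ_{i=h+1}^{N} m_{i,j}}. -/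
open Equiv Finset

/-! Each `w_{i,j}` is a product of descending runs `s_b s_{b-1} ⋯ s_{b-n+1}`. By the braid
relation, `s_k` passes through such a run as `s_{k+1}` when `b - n < k < b`, and it commutes with
the run when `k ≥ b + 2`. So `s_l` commutes with `w_{i,j}` for `i ≤ h`, because
`l > σ_{i-1,j} + m_{i,j}`, while each `w_{i,j}` with `i > h` raises the index by `m_{i,j}`: the
shifted index `l + m_{h+1,j} + ⋯ + m_{i-1,j}` stays strictly between `m̃_{i-1,j}` and
`σ_{i-1,j}`, which is the window where the runs of `w_{i,j}` shift it. -/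

lemma mul_prod_range_eq_prod_range_mul {G : Type*} [Monoid G] (x w : ℕ → G) (n : ℕ)
    (h : ∀ t < n, x t * w t = w t * x (t + 1)) :
    x 0 * ((List.range n).map w).prod = ((List.range n).map w).prod * x n := by
  induction n with
  | zero => simp
  | succ n ih =>
    rw [List.prod_range_succ, ← mul_assoc, ih fun t ht => h t (by omega), mul_assoc,
      h n n.lt_succ_self, mul_assoc]

section SimpleTranspositions

variable {r : ℕ}

lemma sT_commute_of_add_two_le {a b : ℕ} (h : a + 2 ≤ b) : Commute (sT r a) (sT r b) := by
  unfold sT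
  split_ifs
  · refine (Perm.disjoint_swap_swap ?_).commute
    simp [Fin.ext_iff]
    omega
  all_goals simp

lemma sT_braid {k : ℕ} (hk : 1 ≤ k) (hkr : k + 1 < r) :
    sT r k * sT r (k + 1) * sT r k = sT r (k + 1) * sT r k * sT r (k + 1) := by
  unfold sT
  rw [dif_pos ⟨hk, by omega⟩, dif_pos ⟨by omega, hkr⟩]
  set a : Fin r := ⟨k - 1, by omega⟩
  set b : Fin r := ⟨k + 1 - 1, by omega⟩
  set c : Fin r := ⟨k + 1, hkr⟩
  have hab : a ≠ b := by simp only [a, b, ne_eq, Fin.mk.injEq]; omega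
  have hac : a ≠ c := by simp only [a, c, ne_eq, Fin.mk.injEq]; omega
  have hbc : b ≠ c := by simp only [b, c, ne_eq, Fin.mk.injEq]; omega
  calc swap a b * swap b c * swap a b = swap a c := by
        rw [swap_comm a b, swap_comm b c]
        exact swap_mul_swap_mul_swap hbc.symm hac.symm
    _ = swap b c * swap a b * swap b c :=
        ((swap_mul_swap_mul_swap hab hac).trans (swap_comm c a)).symm

lemma descProd_succ (b n : ℕ) : descProd r b (n + 1) = descProd r b n * sT r (b - n) :=
  List.prod_range_succ _ n

lemma sT_commute_descProd_of_add_lt {k b n : ℕ} (h : k + n < b) :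
    Commute (sT r k) (descProd r b n) :=
  Commute.list_prod_right _ _ fun _ hx => by
    obtain ⟨t, ht, rfl⟩ := List.mem_map.1 hx
    exact sT_commute_of_add_two_le (by simp at ht; omega)

lemma sT_commute_descProd_of_add_two_le {k b n : ℕ} (h : b + 2 ≤ k) :
    Commute (sT r k) (descProd r b n) :=
  Commute.list_prod_right _ _ fun _ hx => by
    obtain ⟨t, -, rfl⟩ := List.mem_map.1 hx
    exact (sT_commute_of_add_two_le (by omega)).symm

lemma sT_mul_descProd {k b : ℕ} (n : ℕ) (hk : 1 ≤ k) (hkb : k < b) (hbk : b < k + n)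
    (hbr : b < r) : sT r k * descProd r b n = descProd r b n * sT r (k + 1) := by
  induction n with
  | zero => omega
  | succ n ih =>
    rw [descProd_succ]
    by_cases hkn : b < k + n
    · rw [← mul_assoc, ih hkn, mul_assoc, mul_assoc,
        (sT_commute_of_add_two_le (by omega : b - n + 2 ≤ k + 1)).eq]
    -- the run ends with `s_{k+1} s_k`, where the braid relation applies
    obtain ⟨n, rfl⟩ : ∃ n', n = n' + 1 := ⟨n - 1, by omega⟩
    rw [descProd_succ, show b - (n + 1) = k by omega, show b - n = k + 1 by omega]
    have hcomm : Commute (sT r k) (descProd r b n) := sT_commute_descProd_of_add_lt (by omega)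
    calc sT r k * (descProd r b n * sT r (k + 1) * sT r k)
        = descProd r b n * (sT r k * sT r (k + 1) * sT r k) := by
          simp only [← mul_assoc, hcomm.eq]
      _ = descProd r b n * sT r (k + 1) * sT r k * sT r (k + 1) := by
          rw [sT_braid hk (by omega)]; simp only [mul_assoc]

lemma sT_mul_prod_descProd {l b n : ℕ} (m : ℕ) (hl : 1 ≤ l) (hlb : l < b) (hbl : b < l + n)
    (hbr : b + m ≤ r) :
    sT r l * ((List.range m).map fun x => descProd r (b + x) n).prod
      = ((List.range m).map fun x => descProd r (b + x) n).prod * sT r (l + m) := by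
  induction m with
  | zero => simp
  | succ m ih =>
    rw [List.prod_range_succ, ← mul_assoc, ih (by omega), mul_assoc,
      sT_mul_descProd n (by omega) (by omega) (by omega) (by omega), ← mul_assoc, add_assoc]

end SimpleTranspositions

section MatrixSums

variable {N : ℕ} (M : Fin N → Fin N → ℕ)

lemma ent_eq_sum (i j : ℕ) :
    ent M i j =
      ∑ p : Fin N × Fin N, if p.1.val + 1 = i ∧ p.2.val + 1 = j then M p.1 p.2 else 0 := by
  unfold ent
  split_ifs with h
  · rw [Finset.sum_eq_single (⟨i - 1, by omega⟩, ⟨j - 1, by omega⟩)]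
    · simp only [if_pos (show i - 1 + 1 = i ∧ j - 1 + 1 = j by omega)]
    · rintro ⟨a, b⟩ - hab
      refine if_neg fun ⟨ha, hb⟩ => hab ?_
      dsimp only at ha hb
      ext <;> simp <;> omega
    · simp
  · refine (Finset.sum_eq_zero fun p _ => if_neg ?_).symm
    have := p.1.isLt
    have := p.2.isLt
    omega

lemma mtil_succ (i j : ℕ) : mtil M (i + 1) j = mtil M i j + ent M (i + 1) j := by
  rw [ent_eq_sum, mtil, mtil, add_assoc, ← Finset.sum_add_distrib]
  refine congrArg _ (Finset.sum_congr rfl fun p _ => ?_)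
  split_ifs <;> omega

lemma sigmaS_add_ent_le (i j : ℕ) : sigmaS M i j + ent M (i + 1) j ≤ sigmaS M (i + 1) j := by
  rw [ent_eq_sum, sigmaS, sigmaS, add_assoc, ← Finset.sum_add_distrib]
  gcongr with p
  split_ifs <;> omega

lemma sigmaS_mono (j : ℕ) : Monotone fun i => sigmaS M i j := by
  intro i i' hii'
  simp only [sigmaS]
  gcongr with p
  split_ifs <;> omega

lemma sigmaS_le {r : ℕ} (hMr : ∑ i, ∑ j, M i j = r) (i j : ℕ) : sigmaS M i j ≤ r := by
  rw [← hMr, ← Fintype.sum_prod_type', sigmaS, colPS, ← Finset.sum_add_distrib]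
  gcongr with p
  split_ifs <;> omega

lemma sigmaS_add_ent_mono {i i' : ℕ} (j : ℕ) (hii' : i ≤ i') :
    sigmaS M i j + ent M (i + 1) j ≤ sigmaS M i' j + ent M (i' + 1) j := by
  rcases hii'.eq_or_lt with rfl | hlt
  · rfl
  · have := sigmaS_add_ent_le M i j
    have : sigmaS M (i + 1) j ≤ sigmaS M i' j := sigmaS_mono M j (by omega)
    omega

lemma mtil_eq_add_sum {h i : ℕ} (j : ℕ) (hhi : h ≤ i) :
    mtil M i j = mtil M h j + ∑ i' ∈ Finset.Icc (h + 1) i, ent M i' j := by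
  induction i, hhi using Nat.le_induction with
  | base => simp
  | succ i hhi ih =>
    rw [mtil_succ, ih, Finset.sum_Icc_succ_top (by omega), add_assoc]

lemma sigmaS_add_sum_le {h i : ℕ} (j : ℕ) (hhi : h ≤ i) :
    sigmaS M h j + ∑ i' ∈ Finset.Icc (h + 1) i, ent M i' j ≤ sigmaS M i j := by
  induction i, hhi using Nat.le_induction with
  | base => simp
  | succ i hhi ih =>
    rw [Finset.sum_Icc_succ_top (by omega), ← add_assoc]
    exact (Nat.add_le_add_right ih _).trans (sigmaS_add_ent_le M i j)

end MatrixSums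

section Column

variable {N r : ℕ} (M : Fin N → Fin N → ℕ)

lemma sT_mul_wE {i j l : ℕ} (h1 : mtil M i j < l) (h2 : l < sigmaS M i j)
    (h3 : sigmaS M i j + ent M (i + 1) j ≤ r) :
    sT r l * wE r M (i + 1) j = wE r M (i + 1) j * sT r (l + ent M (i + 1) j) := by
  unfold wE
  rw [Nat.add_sub_cancel]
  exact sT_mul_prod_descProd _ (by omega) h2 (by omega) h3

lemma sT_commute_wE {i j l : ℕ} (h : sigmaS M i j + ent M (i + 1) j < l) :
    Commute (sT r l) (wE r M (i + 1) j) := by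
  unfold wE
  rw [Nat.add_sub_cancel]
  refine Commute.list_prod_right _ _ fun _ hw => ?_
  obtain ⟨x, hx, rfl⟩ := List.mem_map.1 hw
  exact sT_commute_descProd_of_add_two_le (by have := List.mem_range.1 hx; omega)

/-- The index `l` moved past `w_{2,j} ⋯ w_{t+1,j}`. -/
def shiftedIndex (j h l t : ℕ) : ℕ := l + ∑ i ∈ Finset.Icc (h + 1) (t + 1), ent M i j

lemma sT_shiftedIndex_mul_wE (hMr : ∑ i, ∑ j, M i j = r) {j h l : ℕ}
    (hl1 : sigmaS M h j + ent M (h + 1) j < l) (hl2 : l < sigmaS M (h + 1) j)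
    (hl3 : mtil M (h + 1) j < l) (t : ℕ) :
    sT r (shiftedIndex M j (h + 1) l t) * wE r M (t + 2) j
      = wE r M (t + 2) j * sT r (shiftedIndex M j (h + 1) l (t + 1)) := by
  unfold shiftedIndex
  by_cases ht : t + 1 ≤ h
  · rw [Finset.Icc_eq_empty (by omega), Finset.Icc_eq_empty (by omega), Finset.sum_empty,
      add_zero]
    exact (sT_commute_wE M ((sigmaS_add_ent_mono M j ht).trans_lt hl1)).eq
  · have hht : h + 1 ≤ t + 1 := by omega
    rw [Finset.sum_Icc_succ_top (show h + 1 + 1 ≤ t + 1 + 1 by omega), ← add_assoc]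
    refine sT_mul_wE M ?_ ?_ ?_
    · have := mtil_eq_add_sum M j hht
      omega
    · have := sigmaS_add_sum_le M j hht
      omega
    · exact (sigmaS_add_ent_le M (t + 1) j).trans (sigmaS_le M hMr _ j)

end Column

theorem stmt6_general (N r : ℕ) (M : Fin N → Fin N → ℕ)
    (hMr : ∑ i, ∑ j, M i j = r)
    (j h : ℕ) (hh1 : 1 ≤ h)
    (l : ℕ) (hl1 : sigmaS M (h - 1) j + ent M h j < l) (hl2 : l < sigmaS M h j)
    (hl3 : mtil M h j + 1 ≤ l) :
    sT r l * colProd r M j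
      = colProd r M j * sT r (l + ∑ i ∈ Finset.Icc (h + 1) N, ent M i j) := by
  obtain ⟨h, rfl⟩ : ∃ h', h = h' + 1 := ⟨h - 1, by omega⟩
  rw [Nat.add_sub_cancel] at hl1
  have hstart : shiftedIndex M j (h + 1) l 0 = l := by
    simp [shiftedIndex]
  have hend :
      shiftedIndex M j (h + 1) l (N - 1) = l + ∑ i ∈ Finset.Icc (h + 2) N, ent M i j := by
    rcases N.eq_zero_or_pos with rfl | hN
    · simp [shiftedIndex]
    · rw [shiftedIndex, Nat.sub_add_cancel hN]
  have := mul_prod_range_eq_prod_range_mul (fun t => sT r (shiftedIndex M j (h + 1) l t))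
    (fun t => wE r M (t + 2) j) (N - 1)
    fun t _ => sT_shiftedIndex_mul_wE M hMr hl1 hl2 (by omega) t
  rwa [hstart, hend] at this

/-- Lemma `reflection`(2).  For `1 ≤ j ≤ N-1`, `1 ≤ h ≤ N-1` (1-based)
and `σ_{h-1,j} + m_{h,j} < l < σ_{h,j}` with `l ≥ m̃_{h,j} + 1`:
`s_l · (w_{2,j} w_{3,j} ⋯ w_{N,j}) = (w_{2,j} w_{3,j} ⋯ w_{N,j}) · s_{l + Σ_{i=h+1}^N m_{i,j}}`. -/
theorem stmt6 (N r : ℕ) (hN : 2 ≤ N) (M : Fin N → Fin N → ℕ)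
    (hMr : ∑ i, ∑ j, M i j = r)
    (j h : ℕ) (hj1 : 1 ≤ j) (hjN : j ≤ N - 1) (hh1 : 1 ≤ h) (hhN : h ≤ N - 1)
    (l : ℕ) (hl1 : sigmaS M (h - 1) j + ent M h j < l) (hl2 : l < sigmaS M h j)
    (hl3 : mtil M h j + 1 ≤ l) :
    sT r l * colProd r M j
      = colProd r M j * sT r (l + ∑ i ∈ Finset.Icc (h + 1) N, ent M i j) :=
  stmt6_general N r M hMr j h hh1 l hl1 hl2 hl3
end
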